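/- For every t ∈ ℤ, the random series E_t + Σ_{k=1}^∞ (C_θ + N_{t−1}D_α + N_t)(C_θ + N_{t−2}D_α + N_{t−1})⋯(C_θ + N_{t−k}D_α + N_{t−k+1}) E_{t−k} converges (absolutely) in ℝ^p almost surely. -/

import Mathlib

open MeasureTheory ProbabilityTheory Matrix Filter Finset
open scoped BigOperators Topology

attribute [local instance] Matrix.frobeniusNormedAddCommGroup

noncomputable section

namespace RCAR

variable {Ω : Type*} [MeasurableSpace Ω]

/-- The companion matrix `C_θ`: first row `θ`, ones on the subdiagonal. -/
def Cmat {p : ℕ} (θ : Fin p → ℝ) : Matrix (Fin p) (Fin p) ℝ :=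
  Matrix.of fun i j => if (i : ℕ) = 0 then θ j else if (i : ℕ) = (j : ℕ) + 1 then 1 else 0

/-- The random matrix `N_t`: first row `(η_{1,t},…,η_{p,t})`, zeros elsewhere. -/
def Nmat {p : ℕ} (η : Fin p → ℤ → Ω → ℝ) (t : ℤ) (ω : Ω) : Matrix (Fin p) (Fin p) ℝ :=
  Matrix.of fun i j => if (i : ℕ) = 0 then η j t ω else 0

/-- The vector `E_t = (ε_t, 0, …, 0)ᵀ`. -/
def Evec {p : ℕ} (ε : ℤ → Ω → ℝ) (t : ℤ) (ω : Ω) : Fin p → ℝ :=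
  fun i => if (i : ℕ) = 0 then ε t ω else 0

/-- The random matrix `A_t = C_θ + N_{t-1} D_α + N_t`. -/
def Amat {p : ℕ} (θ α : Fin p → ℝ) (η : Fin p → ℤ → Ω → ℝ) (t : ℤ) (ω : Ω) :
    Matrix (Fin p) (Fin p) ℝ :=
  Cmat θ + Nmat η (t - 1) ω * Matrix.diagonal α + Nmat η t ω

/-- The ordered product `A_t A_{t-1} ⋯ A_{t-k+1}`. -/
def Aprod {p : ℕ} (θ α : Fin p → ℝ) (η : Fin p → ℤ → Ω → ℝ) (t : ℤ) (k : ℕ) (ω : Ω) :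
    Matrix (Fin p) (Fin p) ℝ :=
  ((List.range k).map fun ℓ => Amat θ α η (t - ℓ) ω).prod

/-- The lag vector `Φ_t`, defined through the causal series. -/
def Phi {p : ℕ} (θ α : Fin p → ℝ) (ε : ℤ → Ω → ℝ) (η : Fin p → ℤ → Ω → ℝ)
    (t : ℤ) (ω : Ω) : Fin p → ℝ :=
  Evec ε t ω + ∑' k : ℕ, Aprod θ α η t (k + 1) ω *ᵥ Evec ε (t - (k + 1)) ω

/-- The RCAR(p) process `X_t`, first coordinate of `Φ_t`. -/
def X {p : ℕ} [NeZero p] (θ α : Fin p → ℝ) (ε : ℤ → Ω → ℝ) (η : Fin p → ℤ → Ω → ℝ)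
    (t : ℤ) (ω : Ω) : ℝ :=
  Phi θ α ε η t ω 0

/-- Basic structural hypotheses on the noises: measurability, i.i.d. within each sequence,
mutual independence of the `p+1` sequences, centering. -/
structure NoiseHypCore {p : ℕ} (μ : Measure Ω) (ε : ℤ → Ω → ℝ)
    (η : Fin p → ℤ → Ω → ℝ) : Prop where
  meas_eps : ∀ t, Measurable (ε t)
  meas_eta : ∀ k t, Measurable (η k t)
  indep_eps : iIndepFun ε μ
  ident_eps : ∀ t, μ.map (ε t) = μ.map (ε 0)
  indep_eta : ∀ k, iIndepFun (η k) μ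
  ident_eta : ∀ k t, μ.map (η k t) = μ.map (η k 0)
  indep_seqs : iIndepFun (β := fun _ : Option (Fin p) => ℤ → ℝ)
      (fun i ω => i.elim (fun t => ε t ω) (fun k t => η k t ω)) μ
  int_eps : Integrable (ε 0) μ
  mean_eps : ∫ ω, ε 0 ω ∂μ = 0
  int_eta : ∀ k, Integrable (η k 0) μ
  mean_eta : ∀ k, ∫ ω, η k 0 ω ∂μ = 0

/-- Noise hypotheses together with vanishing of every existing odd moment. -/
structure NoiseHyp {p : ℕ} (μ : Measure Ω) (ε : ℤ → Ω → ℝ)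
    (η : Fin p → ℤ → Ω → ℝ) extends NoiseHypCore μ ε η : Prop where
  odd_eps : ∀ q : ℕ, Integrable (fun ω => ε 0 ω ^ (2 * q + 1)) μ →
      ∫ ω, ε 0 ω ^ (2 * q + 1) ∂μ = 0
  odd_eta : ∀ k, ∀ q : ℕ, Integrable (fun ω => η k 0 ω ^ (2 * q + 1)) μ →
      ∫ ω, η k 0 ω ^ (2 * q + 1) ∂μ = 0

/-- Contraction condition `E[ln ‖C_θ + N_0 D_α + N_1‖] < 0` (Frobenius norm). -/
def LyapCond {p : ℕ} (μ : Measure Ω) (θ α : Fin p → ℝ)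
    (η : Fin p → ℤ → Ω → ℝ) : Prop :=
  Integrable (fun ω => Real.log ‖Amat θ α η 1 ω‖) μ ∧
    ∫ ω, Real.log ‖Amat θ α η 1 ω‖ ∂μ < 0

/-- Condition `E[ln⁺ |ε_0|] < ∞`. -/
def EpsLogCond (μ : Measure Ω) (ε : ℤ → Ω → ℝ) : Prop :=
  Integrable (fun ω => max (Real.log |ε 0 ω|) 0) μ

/-- Autocovariance `ℓ_i = E[X_i X_0]`. -/
def acov {p : ℕ} [NeZero p] (μ : Measure Ω) (θ α : Fin p → ℝ) (ε : ℤ → Ω → ℝ)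
    (η : Fin p → ℤ → Ω → ℝ) (i : ℕ) : ℝ :=
  ∫ ω, X θ α ε η (i : ℤ) ω * X θ α ε η 0 ω ∂μ

/-- The autocovariance matrix `Λ_0` with entries `ℓ_{|i-j|}`. -/
def Lam0 {p : ℕ} [NeZero p] (μ : Measure Ω) (θ α : Fin p → ℝ) (ε : ℤ → Ω → ℝ)
    (η : Fin p → ℤ → Ω → ℝ) : Matrix (Fin p) (Fin p) ℝ :=
  Matrix.of fun i j => acov μ θ α ε η (((i : ℕ) : ℤ) - ((j : ℕ) : ℤ)).natAbs

/-- The vector `L_1 = (ℓ_1, …, ℓ_p)ᵀ`. -/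
def L1vec {p : ℕ} [NeZero p] (μ : Measure Ω) (θ α : Fin p → ℝ) (ε : ℤ → Ω → ℝ)
    (η : Fin p → ℤ → Ω → ℝ) : Fin p → ℝ :=
  fun i => acov μ θ α ε η ((i : ℕ) + 1)

/-- `S_{n-1} = ∑_{t=0}^{n-1} Φ_t Φ_tᵀ`. -/
def Sprev {p : ℕ} (θ α : Fin p → ℝ) (ε : ℤ → Ω → ℝ) (η : Fin p → ℤ → Ω → ℝ)
    (n : ℕ) (ω : Ω) : Matrix (Fin p) (Fin p) ℝ :=
  ∑ t ∈ Finset.range n, vecMulVec (Phi θ α ε η (t : ℤ) ω) (Phi θ α ε η (t : ℤ) ω)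

/-- `∑_{t=1}^{n} Φ_{t-1} X_t`. -/
def bvec {p : ℕ} [NeZero p] (θ α : Fin p → ℝ) (ε : ℤ → Ω → ℝ) (η : Fin p → ℤ → Ω → ℝ)
    (n : ℕ) (ω : Ω) : Fin p → ℝ :=
  ∑ t ∈ Finset.range n, X θ α ε η ((t : ℤ) + 1) ω • Phi θ α ε η (t : ℤ) ω

/-- The OLS estimator `θ̂_n = S_{n-1}⁻¹ ∑_{t=1}^n Φ_{t-1} X_t`. -/
def thetaHat {p : ℕ} [NeZero p] (θ α : Fin p → ℝ) (ε : ℤ → Ω → ℝ)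
    (η : Fin p → ℤ → Ω → ℝ) (n : ℕ) (ω : Ω) : Fin p → ℝ :=
  (Sprev θ α ε η n ω)⁻¹ *ᵥ bvec θ α ε η n ω

/-- Second-order moment assumption `Θ₂`. -/
def Theta2 {p : ℕ} [NeZero p] (μ : Measure Ω) (θ α : Fin p → ℝ) (ε : ℤ → Ω → ℝ)
    (η : Fin p → ℤ → Ω → ℝ) : Prop :=
  Integrable (fun ω => ε 0 ω ^ 2) μ ∧ (∀ k, Integrable (fun ω => η k 0 ω ^ 4) μ) ∧
    ∀ k, ∀ a : ℕ, a ≤ 2 → Integrable (fun ω => |η k 0 ω| ^ a * X θ α ε η 0 ω ^ 2) μ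

/-- Fourth-order moment assumption `Θ₄`. -/
def Theta4 {p : ℕ} [NeZero p] (μ : Measure Ω) (θ α : Fin p → ℝ) (ε : ℤ → Ω → ℝ)
    (η : Fin p → ℤ → Ω → ℝ) : Prop :=
  Integrable (fun ω => ε 0 ω ^ 4) μ ∧ (∀ k, Integrable (fun ω => η k 0 ω ^ 8) μ) ∧
    ∀ k, ∀ a : ℕ, a ≤ 4 → Integrable (fun ω => |η k 0 ω| ^ a * X θ α ε η 0 ω ^ 4) μ

/-- `τ_{k,2} = E[η_{k,0}²]`. -/
def tau2 {p : ℕ} (μ : Measure Ω) (η : Fin p → ℤ → Ω → ℝ) (k : Fin p) : ℝ :=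
  ∫ ω, η k 0 ω ^ 2 ∂μ

/-- `σ₂ = E[ε_0²]`. -/
def sigma2 (μ : Measure Ω) (ε : ℤ → Ω → ℝ) : ℝ :=
  ∫ ω, ε 0 ω ^ 2 ∂μ

/-- `β₁ = α₁ τ_{1,2}`. -/
def beta1 {p : ℕ} [NeZero p] (μ : Measure Ω) (α : Fin p → ℝ)
    (η : Fin p → ℤ → Ω → ℝ) : ℝ :=
  α 0 * tau2 μ η 0

/-- `β₂ = α₂ τ_{2,2} + ⋯ + α_p τ_{p,2}`. -/
def beta2 {p : ℕ} (μ : Measure Ω) (α : Fin p → ℝ) (η : Fin p → ℤ → Ω → ℝ) : ℝ :=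
  ∑ k : Fin p, if (k : ℕ) = 0 then 0 else α k * tau2 μ η k

/-- `θ` extended by zero (`thext θ m` is the 1-based coefficient `θ_{m+1}`). -/
def thext {p : ℕ} (θ : Fin p → ℝ) (m : ℕ) : ℝ :=
  if h : m < p then θ ⟨m, h⟩ else 0

/-- The matrix `M_θ` (Toeplitz part plus Hankel part). -/
def Mtheta {p : ℕ} (θ : Fin p → ℝ) : Matrix (Fin p) (Fin p) ℝ :=
  Matrix.of fun i j =>
    (if (j : ℕ) ≤ (i : ℕ) then thext θ ((i : ℕ) - (j : ℕ)) else 0) +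
      (if 1 ≤ (j : ℕ) then thext θ ((i : ℕ) + (j : ℕ)) else 0)

/-- The matrix `B` with `B_{1,2} = β₂` and subdiagonal entries `β₁`. -/
def Bmat {p : ℕ} [NeZero p] (μ : Measure Ω) (α : Fin p → ℝ)
    (η : Fin p → ℤ → Ω → ℝ) : Matrix (Fin p) (Fin p) ℝ :=
  Matrix.of fun i j =>
    if (i : ℕ) = 0 ∧ (j : ℕ) = 1 then beta2 μ α η
    else if (i : ℕ) = (j : ℕ) + 1 then beta1 μ α η else 0

/-- The matrix `M_{α,β} = diag(1/(1-2β₁),1,…,1)(M_θ + B)`. -/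
def Mab {p : ℕ} [NeZero p] (μ : Measure Ω) (θ α : Fin p → ℝ)
    (η : Fin p → ℤ → Ω → ℝ) : Matrix (Fin p) (Fin p) ℝ :=
  Matrix.diagonal (fun i : Fin p => if (i : ℕ) = 0 then 1 / (1 - 2 * beta1 μ α η) else 1) *
    (Mtheta θ + Bmat μ α η)

/-- `U₀`: first column of `M_{α,β}`. -/
def U0 {p : ℕ} [NeZero p] (μ : Measure Ω) (θ α : Fin p → ℝ)
    (η : Fin p → ℤ → Ω → ℝ) : Fin p → ℝ :=
  fun i => Mab μ θ α η i 0

/-- `K`: the last `p-1` columns of `M_{α,β}` followed by a zero column. -/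
def Kmat {p : ℕ} [NeZero p] (μ : Measure Ω) (θ α : Fin p → ℝ)
    (η : Fin p → ℤ → Ω → ℝ) : Matrix (Fin p) (Fin p) ℝ :=
  Matrix.of fun i j =>
    if h : (j : ℕ) + 1 < p then Mab μ θ α η i ⟨(j : ℕ) + 1, h⟩ else 0

/-- The scalar `s₀`. -/
def s0 {p : ℕ} [NeZero p] (μ : Measure Ω) (θ α : Fin p → ℝ) (ε : ℤ → Ω → ℝ)
    (η : Fin p → ℤ → Ω → ℝ) : ℝ :=
  (1 + α 0 * thext θ 1 + 2 * α 0 * thext θ 0 ^ 2 / (1 - 2 * beta1 μ α η) +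
      sigma2 μ ε / (1 - α 0 * beta1 μ α η)) * tau2 μ η 0 +
    ∑ k : Fin p, if (k : ℕ) = 0 then 0 else (1 + α k ^ 2) * tau2 μ η k

/-- The filtration `F*_n = σ(Φ_0, η_{·,0}, (ε_s, η_{·,s}), 1 ≤ s ≤ n)`. -/
def Fstar {p : ℕ} (θ α : Fin p → ℝ) (ε : ℤ → Ω → ℝ) (η : Fin p → ℤ → Ω → ℝ)
    (n : ℕ) : MeasurableSpace Ω :=
  MeasurableSpace.comap (fun ω => (Phi θ α ε η 0 ω, fun k : Fin p => η k 0 ω)) inferInstance ⊔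
    ⨆ s ∈ Finset.Icc 1 n,
      MeasurableSpace.comap (fun ω => (ε (s : ℤ) ω, fun k : Fin p => η k (s : ℤ) ω)) inferInstance

/-- `M` is a martingale with respect to the family of σ-algebras `F`. -/
def IsMartingaleWRT {E : Type*} [NormedAddCommGroup E] [NormedSpace ℝ E] [CompleteSpace E]
    (μ : Measure Ω) (F : ℕ → MeasurableSpace Ω) (M : ℕ → Ω → E) : Prop :=
  (∀ n, StronglyMeasurable[F n] (M n)) ∧ (∀ n, Integrable (M n) μ) ∧
    ∀ n, μ[M (n + 1)|F n] =ᵐ[μ] M n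

/-- A remainder process `R` with `‖R_n‖ = o(√n)` almost surely. -/
def Negligible {E : Type*} [NormedAddCommGroup E] (μ : Measure Ω) (R : ℕ → Ω → E) : Prop :=
  ∀ᵐ ω ∂μ, Tendsto (fun n : ℕ => ‖R n ω‖ / Real.sqrt n) atTop (𝓝 0)

/-- `U = (u_1,…,u_{p-1},0)ᵀ` realizes the martingale decomposition of `∑ X_t²`
(the conclusion of Lemma A.4). -/
def UDecomp {p : ℕ} [NeZero p] (μ : Measure Ω) (θ α : Fin p → ℝ) (ε : ℤ → Ω → ℝ)
    (η : Fin p → ℤ → Ω → ℝ) (U : Fin p → ℝ) : Prop :=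
  (∀ i : Fin p, (i : ℕ) = p - 1 → U i = 0) ∧
    ∃ M R : ℕ → Ω → ℝ, IsMartingaleWRT μ (Fstar θ α ε η) M ∧ Negligible μ R ∧
      ∀ᵐ ω ∂μ, ∀ n : ℕ, 1 ≤ n →
        ∑ t ∈ Finset.range n, X θ α ε η ((t : ℤ) + 1) ω ^ 2 =
          (U ⬝ᵥ bvec θ α ε η n ω) / (1 - s0 μ θ α ε η) +
            (acov μ θ α ε η 0 - U ⬝ᵥ L1vec μ θ α ε η / (1 - s0 μ θ α ε η)) * n +
            M n ω + R n ω

end RCAR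

/-! The matrix `A_t = C_θ + N_{t-1} D_α + N_t` depends only on the noise rows at times `t - 1`
and `t`, so `(log ‖A_{t-ℓ}‖)_ℓ` is stationary and `1`-dependent: its even-indexed and its
odd-indexed terms are each i.i.d., and the strong law of large numbers applied to both gives
`(1/n) ∑_{ℓ<n} log ‖A_{t-ℓ}‖ → E[log ‖A_1‖] < 0` almost surely. The strong law for the i.i.d.
`log⁺ |ε_s|` gives `log⁺ |ε_{t-k}| / k → 0`. By submultiplicativity of the Frobenius norm the
`k`-th term of the series is then at most `exp (k (E[log ‖A_1‖] + o(1)))`, which decays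
geometrically. -/

theorem sum_range_two_mul {M : Type*} [AddCommMonoid M] (a : ℕ → M) (n : ℕ) :
    ∑ i ∈ range (2 * n), a i = ∑ i ∈ range n, a (2 * i) + ∑ i ∈ range n, a (2 * i + 1) := by
  induction n with
  | zero => simp
  | succ n ih =>
    rw [Nat.mul_succ, sum_range_succ, sum_range_succ, ih, sum_range_succ, sum_range_succ]
    abel

theorem tendsto_of_tendsto_even_odd {α : Type*} {l : Filter α} {f : ℕ → α}
    (he : Tendsto (fun k => f (2 * k)) atTop l) (ho : Tendsto (fun k => f (2 * k + 1)) atTop l) :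
    Tendsto f atTop l := by
  intro s hs
  obtain ⟨N₁, hN₁⟩ := eventually_atTop.1 (he hs)
  obtain ⟨N₂, hN₂⟩ := eventually_atTop.1 (ho hs)
  refine eventually_atTop.2 ⟨2 * (N₁ + N₂), fun n hn => ?_⟩
  obtain ⟨k, rfl | rfl⟩ := Nat.even_or_odd' n
  · exact hN₁ k (by omega)
  · exact hN₂ k (by omega)

section Averages

variable {a : ℕ → ℝ} {L : ℝ}

theorem tendsto_sum_range_succ_div
    (h : Tendsto (fun n : ℕ => (∑ i ∈ range n, a i) / n) atTop (𝓝 L)) :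
    Tendsto (fun n : ℕ => (∑ i ∈ range (n + 1), a i) / n) atTop (𝓝 L) := by
  have hshift : Tendsto (fun n : ℕ => (∑ i ∈ range (n + 1), a i) / (n + 1 : ℝ)) atTop (𝓝 L) := by
    simpa [Function.comp_def] using h.comp (tendsto_add_atTop_nat 1)
  have hratio : Tendsto (fun n : ℕ => 1 + 1 / (n : ℝ)) atTop (𝓝 1) := by
    simpa using tendsto_one_div_atTop_nhds_zero_nat.const_add (1 : ℝ)
  refine (mul_one L ▸ hshift.mul hratio).congr' ?_
  filter_upwards [eventually_ne_atTop 0] with n hn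
  field_simp

theorem tendsto_div_natCast_zero_of_tendsto_avg
    (h : Tendsto (fun n : ℕ => (∑ i ∈ range n, a i) / n) atTop (𝓝 L)) :
    Tendsto (fun n : ℕ => a n / n) atTop (𝓝 0) := by
  simpa [sum_range_succ, add_div] using (tendsto_sum_range_succ_div h).sub h

theorem tendsto_avg_of_even_odd
    (he : Tendsto (fun n : ℕ => (∑ i ∈ range n, a (2 * i)) / n) atTop (𝓝 L))
    (ho : Tendsto (fun n : ℕ => (∑ i ∈ range n, a (2 * i + 1)) / n) atTop (𝓝 L)) :
    Tendsto (fun n : ℕ => (∑ i ∈ range n, a i) / n) atTop (𝓝 L) := by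
  apply tendsto_of_tendsto_even_odd
  · have hsum : Tendsto (fun k : ℕ => (∑ i ∈ range k, a (2 * i)) / k
        + (∑ i ∈ range k, a (2 * i + 1)) / k) atTop (𝓝 (L + L)) := he.add ho
    refine (add_self_div_two L ▸ hsum.div_const 2).congr' ?_
    filter_upwards [eventually_ne_atTop 0] with k hk
    rw [sum_range_two_mul]
    push_cast
    field_simp
  · have hsum : Tendsto (fun k : ℕ => (∑ i ∈ range (k + 1), a (2 * i)) / k
        + (∑ i ∈ range k, a (2 * i + 1)) / k) atTop (𝓝 (L + L)) :=
      (tendsto_sum_range_succ_div he).add ho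
    have htwo : Tendsto (fun k : ℕ => 2 + 1 / (k : ℝ)) atTop (𝓝 2) := by
      simpa using tendsto_one_div_atTop_nhds_zero_nat.const_add (2 : ℝ)
    refine (add_self_div_two L ▸ hsum.div htwo two_ne_zero).congr' ?_
    filter_upwards [eventually_ne_atTop 0] with k hk
    simp only [Pi.div_apply, sum_range_succ, sum_range_two_mul]
    push_cast
    field_simp
    ring

end Averages

theorem summable_exp_of_tendsto_div_neg {b : ℕ → ℝ} {m : ℝ}
    (hb : Tendsto (fun n : ℕ => b n / n) atTop (𝓝 m)) (hm : m < 0) :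
    Summable fun n => Real.exp (b n) := by
  refine Summable.of_norm_bounded_eventually_nat
    (summable_geometric_of_lt_one (Real.exp_pos (m / 2)).le (Real.exp_lt_one_iff.2 (by linarith)))
    ?_
  filter_upwards [hb.eventually_lt_const (by linarith : m < m / 2), eventually_gt_atTop 0]
    with n hn hn0
  rw [Real.norm_of_nonneg (Real.exp_pos _).le, ← Real.exp_nat_mul, Real.exp_le_exp]
  rw [div_lt_iff₀ (by exact_mod_cast hn0)] at hn
  linarith

theorem Real.prod_le_exp_sum_log {ι : Type*} (s : Finset ι) {f : ι → ℝ}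
    (hf : ∀ i ∈ s, 0 ≤ f i) : ∏ i ∈ s, f i ≤ Real.exp (∑ i ∈ s, Real.log (f i)) := by
  rw [Real.exp_sum]
  exact prod_le_prod hf fun i _ => Real.le_exp_log (f i)

namespace Matrix

variable {m n : Type*} [Fintype m] [Fintype n]

theorem norm_entry_le_frobenius_norm (A : Matrix m n ℝ) (i : m) (j : n) : ‖A i j‖ ≤ ‖A‖ :=
  calc ‖A i j‖ ≤ ‖WithLp.toLp 2 (A i)‖ := PiLp.norm_apply_le (WithLp.toLp 2 (A i)) j
    _ ≤ ‖WithLp.toLp 2 fun i => WithLp.toLp 2 (A i)‖ :=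
      PiLp.norm_apply_le (WithLp.toLp 2 fun i => WithLp.toLp 2 (A i)) i

theorem norm_mulVec_single_le_frobenius_norm [DecidableEq n] (A : Matrix m n ℝ) (j : n)
    (x : ℝ) : ‖A *ᵥ Pi.single j x‖ ≤ ‖A‖ * ‖x‖ := by
  refine (pi_norm_le_iff_of_nonneg (by positivity)).2 fun i => ?_
  rw [mulVec_single, Pi.smul_apply, op_smul_eq_mul, norm_mul]
  exact mul_le_mul_of_nonneg_right (norm_entry_le_frobenius_norm A i j) (norm_nonneg x)

end Matrix

namespace ProbabilityTheory

variable {Ω E : Type*} [MeasurableSpace Ω] [MeasurableSpace E] {μ : Measure Ω}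

theorem iIndepFun.curry {ι κ : Type*} {X : ι → κ → Ω → E} (hX : ∀ i j, Measurable (X i j))
    (h : iIndepFun (fun (q : ι × κ) ω => X q.1 q.2 ω) μ) :
    iIndepFun (fun i ω j => X i j ω) μ := by
  have := h.isProbabilityMeasure
  have : ∀ i j, IsProbabilityMeasure (μ.map (X i j)) :=
    fun i j => Measure.isProbabilityMeasure_map (hX i j).aemeasurable
  have hrow : ∀ i, μ.map (fun ω j => X i j ω) = Measure.infinitePi fun j => μ.map (X i j) :=
    fun i => (h.precomp (Prod.mk_right_injective i)).map_fun_eq_infinitePi_map (hX i)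
  rw [iIndepFun_iff_map_fun_eq_infinitePi_map fun i => measurable_pi_lambda _ (hX i)]
  calc μ.map (fun ω i j => X i j ω)
      = (μ.map fun ω (q : ι × κ) => X q.1 q.2 ω).map (MeasurableEquiv.curry ι κ E) := by
        rw [Measure.map_map (by fun_prop)
          (measurable_pi_lambda (fun ω (q : ι × κ) => X q.1 q.2 ω) fun q => hX q.1 q.2)]
        rfl
    _ = (Measure.infinitePi fun q : ι × κ => μ.map (X q.1 q.2)).map
          (MeasurableEquiv.curry ι κ E) := by
        congr 1
        exact h.map_fun_eq_infinitePi_map fun q => hX q.1 q.2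
    _ = Measure.infinitePi fun i => μ.map fun ω j => X i j ω := by
        simp_rw [Measure.infinitePi_map_curry (fun i j => μ.map (X i j)), hrow]

section Window

variable {Z : ℤ → Ω → E} {F : E × E → ℝ}

theorem identDistrib_window (hind : iIndepFun Z μ) (hid : ∀ t, IdentDistrib (Z t) (Z 0) μ μ)
    (hF : Measurable F) (s : ℤ) :
    IdentDistrib (fun ω => F (Z (s - 1) ω, Z s ω)) (fun ω => F (Z 0 ω, Z 1 ω)) μ μ := by
  have := hind.isProbabilityMeasure
  exact ((hid (s - 1)).prodMk ((hid s).trans (hid 1).symm) (hind.indepFun (by omega))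
    (hind.indepFun (by omega))).comp hF

theorem indepFun_window (hZ : ∀ t, Measurable (Z t)) (hind : iIndepFun Z μ)
    (hF : Measurable F) {s s' : ℤ} (hss' : s + 1 < s' ∨ s' + 1 < s) :
    IndepFun (fun ω => F (Z (s - 1) ω, Z s ω)) (fun ω => F (Z (s' - 1) ω, Z s' ω)) μ :=
  (hind.indepFun_prodMk_prodMk hZ (s - 1) s (s' - 1) s' (by omega) (by omega) (by omega)
    (by omega)).comp hF hF

variable (hZ : ∀ t, Measurable (Z t)) (hind : iIndepFun Z μ)
  (hid : ∀ t, IdentDistrib (Z t) (Z 0) μ μ) (hF : Measurable F)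
  (hint : Integrable (fun ω => F (Z 0 ω, Z 1 ω)) μ)
include hZ hind hid hF hint

theorem ae_tendsto_avg_window_two_mul (r : ℤ) :
    ∀ᵐ ω ∂μ, Tendsto
      (fun n : ℕ => (∑ i ∈ range n, F (Z (r - 2 * i - 1) ω, Z (r - 2 * i) ω)) / n)
      atTop (𝓝 (∫ ω, F (Z 0 ω, Z 1 ω) ∂μ)) := by
  have hW := identDistrib_window hind hid hF
  have := strong_law_ae_real (fun (i : ℕ) ω => F (Z (r - 2 * i - 1) ω, Z (r - 2 * i) ω))
    ((hW _).integrable_iff.2 hint)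
    (fun i j hij => indepFun_window hZ hind hF (by omega))
    (fun i => (hW _).trans (hW _).symm)
  simpa only [(hW _).integral_eq] using this

theorem ae_tendsto_avg_window (t : ℤ) :
    ∀ᵐ ω ∂μ, Tendsto (fun n : ℕ => (∑ ℓ ∈ range n, F (Z (t - ℓ - 1) ω, Z (t - ℓ) ω)) / n)
      atTop (𝓝 (∫ ω, F (Z 0 ω, Z 1 ω) ∂μ)) := by
  filter_upwards [ae_tendsto_avg_window_two_mul hZ hind hid hF hint t,
    ae_tendsto_avg_window_two_mul hZ hind hid hF hint (t - 1)] with ω heven hodd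
  refine tendsto_avg_of_even_odd (a := fun ℓ : ℕ => F (Z (t - ℓ - 1) ω, Z (t - ℓ) ω)) ?_ ?_
  · simpa only [Nat.cast_mul, Nat.cast_ofNat] using heven
  · convert hodd using 6 <;> congr 1 <;> push_cast <;> ring

end Window

end ProbabilityTheory

namespace RCAR

section

variable {Ω : Type*} {p : ℕ}

theorem Evec_eq_single [NeZero p] (ε : ℤ → Ω → ℝ) (t : ℤ) (ω : Ω) :
    Evec ε t ω = (Pi.single 0 (ε t ω) : Fin p → ℝ) := by
  ext i
  simp only [Evec, Pi.single_apply, Fin.val_eq_zero_iff]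

theorem norm_Aprod_le (θ α : Fin p → ℝ) (η : Fin p → ℤ → Ω → ℝ) (t : ℤ) (k : ℕ) (ω : Ω) :
    ‖Aprod θ α η t (k + 1) ω‖ ≤ ∏ ℓ ∈ range (k + 1), ‖Amat θ α η (t - ℓ) ω‖ := by
  let := Matrix.frobeniusNormedRing (α := ℝ) (m := Fin p)
  refine (List.norm_prod_le' (by simp [← List.map_eq_flatMap])).trans_eq ?_
  simp [prod_eq_multiset_prod, Multiset.range, ← List.map_eq_flatMap, Function.comp_def]

theorem norm_Aprod_mulVec_Evec_le [NeZero p] (θ α : Fin p → ℝ) (ε : ℤ → Ω → ℝ)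
    (η : Fin p → ℤ → Ω → ℝ) (t : ℤ) (k : ℕ) (ω : Ω) :
    ‖Aprod θ α η t (k + 1) ω *ᵥ Evec ε (t - (k + 1)) ω‖ ≤
      Real.exp (∑ ℓ ∈ range (k + 1), Real.log ‖Amat θ α η (t - ℓ) ω‖
        + max (Real.log |ε (t - (k + 1)) ω|) 0) := by
  rw [Evec_eq_single, Real.exp_add]
  refine (norm_mulVec_single_le_frobenius_norm _ _ _).trans
    (mul_le_mul ?_ ?_ (norm_nonneg _) (by positivity))
  · exact (norm_Aprod_le θ α η t k ω).trans (Real.prod_le_exp_sum_log _ fun _ _ => norm_nonneg _)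
  · exact (Real.le_exp_log _).trans (Real.exp_le_exp.2 (le_max_left _ _))

end

variable {Ω : Type*} [MeasurableSpace Ω] {p : ℕ} {μ : Measure Ω} {ε : ℤ → Ω → ℝ}
  {η : Fin p → ℤ → Ω → ℝ}

theorem NoiseHypCore.iIndepFun_eta (hn : NoiseHypCore μ ε η) :
    iIndepFun (fun (q : Fin p × ℤ) ω => η q.1 q.2 ω) μ :=
  iIndepFun_uncurry' hn.meas_eta (hn.indep_seqs.precomp (Option.some_injective _)) hn.indep_eta

theorem NoiseHypCore.iIndepFun_rows (hn : NoiseHypCore μ ε η) :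
    iIndepFun (fun t ω k => η k t ω) μ :=
  (hn.iIndepFun_eta.precomp Prod.swap_injective).curry fun t k => hn.meas_eta k t

theorem NoiseHypCore.identDistrib_row (hn : NoiseHypCore μ ε η) (t : ℤ) :
    IdentDistrib (fun ω k => η k t ω) (fun ω k => η k 0 ω) μ μ :=
  IdentDistrib.pi
    (fun k => ⟨(hn.meas_eta k t).aemeasurable, (hn.meas_eta k 0).aemeasurable, hn.ident_eta k t⟩)
    (hn.iIndepFun_eta.precomp (Prod.mk_left_injective t))
    (hn.iIndepFun_eta.precomp (Prod.mk_left_injective 0))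

theorem NoiseHypCore.ae_tendsto_avg_log_norm_Amat (hn : NoiseHypCore μ ε η) (θ α : Fin p → ℝ)
    (hint : Integrable (fun ω => Real.log ‖Amat θ α η 1 ω‖) μ) (t : ℤ) :
    ∀ᵐ ω ∂μ, Tendsto (fun n : ℕ => (∑ ℓ ∈ range n, Real.log ‖Amat θ α η (t - ℓ) ω‖) / n)
      atTop (𝓝 (∫ ω, Real.log ‖Amat θ α η 1 ω‖ ∂μ)) := by
  let rowMatrix (u : Fin p → ℝ) : Matrix (Fin p) (Fin p) ℝ :=
    Matrix.of fun i j => if (i : ℕ) = 0 then u j else 0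
  have hrow : Continuous rowMatrix :=
    continuous_pi fun i => continuous_pi fun j => by
      by_cases hi : (i : ℕ) = 0 <;> simp [rowMatrix, hi, continuous_apply, continuous_const]
  have hF : Measurable fun uv : (Fin p → ℝ) × (Fin p → ℝ) =>
      Real.log ‖Cmat θ + rowMatrix uv.1 * diagonal α + rowMatrix uv.2‖ :=
    Real.measurable_log.comp (continuous_norm.comp (by fun_prop)).measurable
  -- `Amat θ α η s ω` is by definition this function of the noise rows at times `s - 1` and `s`.
  exact ae_tendsto_avg_window (fun t => measurable_pi_lambda _ fun k => hn.meas_eta k t)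
    hn.iIndepFun_rows hn.identDistrib_row hF hint t

theorem NoiseHypCore.ae_tendsto_avg_logPos_eps (hn : NoiseHypCore μ ε η)
    (heps : EpsLogCond μ ε) (t : ℤ) :
    ∀ᵐ ω ∂μ, Tendsto
      (fun n : ℕ => (∑ k ∈ range n, max (Real.log |ε (t - (k + 1)) ω|) 0) / n)
      atTop (𝓝 (∫ ω, max (Real.log |ε 0 ω|) 0 ∂μ)) := by
  have hg : Measurable fun x : ℝ => max (Real.log |x|) 0 := by fun_prop
  have hid : ∀ s, IdentDistrib (ε s) (ε 0) μ μ := fun s =>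
    ⟨(hn.meas_eps s).aemeasurable, (hn.meas_eps 0).aemeasurable, hn.ident_eps s⟩
  have hid₀ : IdentDistrib (fun ω => max (Real.log |ε (t - ((0 : ℕ) + 1)) ω|) 0)
      (fun ω => max (Real.log |ε 0 ω|) 0) μ μ := (hid _).comp hg
  have := strong_law_ae_real (fun (k : ℕ) ω => max (Real.log |ε (t - (k + 1)) ω|) 0)
    (hid₀.integrable_iff.2 heps)
    (fun i j hij => (hn.indep_eps.indepFun (by omega)).comp hg hg)
    (fun k => ((hid _).trans (hid _).symm).comp hg)
  rwa [hid₀.integral_eq] at this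

theorem rcar_causal_series_summable {Ω : Type*} [MeasurableSpace Ω] {p : ℕ} [NeZero p]
    (μ : Measure Ω) [IsProbabilityMeasure μ] (θ α : Fin p → ℝ)
    (ε : ℤ → Ω → ℝ) (η : Fin p → ℤ → Ω → ℝ)
    (hnoise : NoiseHyp μ ε η) (hlyap : LyapCond μ θ α η) (heps : EpsLogCond μ ε)
    (t : ℤ) :
    ∀ᵐ ω ∂μ, Summable fun k : ℕ => Aprod θ α η t (k + 1) ω *ᵥ Evec ε (t - (k + 1)) ω := by
  filter_upwards [hnoise.ae_tendsto_avg_log_norm_Amat θ α hlyap.1 t,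
    hnoise.ae_tendsto_avg_logPos_eps heps t] with ω hA hε
  refine Summable.of_norm_bounded (summable_exp_of_tendsto_div_neg ?_ hlyap.2)
    (norm_Aprod_mulVec_Evec_le θ α ε η t · ω)
  simpa [add_div] using
    (tendsto_sum_range_succ_div hA).add (tendsto_div_natCast_zero_of_tendsto_avg hε)

end RCAR
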